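/- Let G be a near-bipartite brick with removable doubleton {e1, e2}, H = G − {e1, e2} bipartite with bipartition (U, W), e1 ⊆ U, e2 ⊆ W. If e is an edge of G not in {e1, e2} that is nonremovable in G but removable in H (type I), then there exist partitions (A1, A2) of U and (B1, B2) of W with |B1| = |A1| + 1, |A2| = |B2| + 1, both ends of e1 in A2, both ends of e2 in B1, and e the unique edge of G joining A1 to B2; moreover, B1 and A2 are barriers of G − e. -/

import Mathlib

open SimpleGraph Set

universe u
variable {V : Type u}

/-- Number of odd components of a graph. -/
noncomputable def oddComps (G : SimpleGraph V) : ℕ :=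
  Nat.card {c : G.ConnectedComponent // Odd (Nat.card c.supp)}

/-- `S` is a barrier of `G`: the number of odd components of `G − S` equals `|S|`. -/
def IsBarrier (G : SimpleGraph V) (S : Set V) : Prop :=
  oddComps (G.induce Sᶜ) = S.ncard

/-- `G` has a perfect matching. -/
def HasPM (G : SimpleGraph V) : Prop :=
  ∃ M : Subgraph G, M.IsPerfectMatching

/-- `G` is matching covered. -/
def MatchingCovered (G : SimpleGraph V) : Prop :=
  G.Connected ∧ G.edgeSet.Nonempty ∧
    ∀ e ∈ G.edgeSet, ∃ M : Subgraph G, M.IsPerfectMatching ∧ e ∈ M.edgeSet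

/-- An edge `e` of a matching covered graph `G` is removable. -/
def Removable (G : SimpleGraph V) (e : Sym2 V) : Prop :=
  e ∈ G.edgeSet ∧ MatchingCovered (G.deleteEdges {e})

/-- `G` is 3-connected. -/
def ThreeConnected (G : SimpleGraph V) : Prop :=
  4 ≤ Nat.card V ∧ ∀ S : Set V, S.ncard ≤ 2 → (G.induce Sᶜ).Connected

/-- A brick. -/
def IsBrick (G : SimpleGraph V) : Prop :=
  ThreeConnected G ∧ ∀ x y : V, x ≠ y → HasPM (G.induce ({x, y} : Set V)ᶜ)

/-- neighbours outside `S` of vertices of `S`. -/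
def Nbrs (G : SimpleGraph V) (S : Set V) : Set V :=
  {v | v ∉ S ∧ ∃ u ∈ S, G.Adj u v}

/-- factor-critical graph. -/
def FactorCritical (G : SimpleGraph V) : Prop :=
  ∀ v : V, HasPM (G.induce ({v} : Set V)ᶜ)

/-- `(U, W)` is a bipartition of `G`. -/
def IsBipartition (G : SimpleGraph V) (U W : Set V) : Prop :=
  Disjoint U W ∧ U ∪ W = Set.univ ∧
    ∀ a b : V, G.Adj a b → (a ∈ U ∧ b ∈ W) ∨ (a ∈ W ∧ b ∈ U)

/-!
Every edge of `G` other than `e₁ = a₁b₁ ⊆ U` and `e₂ = a₂b₂ ⊆ W` joins `U` to `W`, and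
`|U| = |W|` because `H` has a perfect matching; counting then shows that a perfect matching
contains `e₁` if and only if it contains `e₂`. Since `H − e` is matching covered but `G − e` is
not, no perfect matching of `G − e` contains `e₁`. So the bipartite graph of `G − e` between
`U ∖ {a₁, b₁}` and `W ∖ {a₂, b₂}` has no matching covering the first side, and Hall's theorem
gives a set `A₁` there with fewer than `|A₁|` neighbours `N`. As `G` is a brick, `G` has a
perfect matching through `e₁`; it must contain `e₂` and `e`, and it maps `A₁ ∖ {x}` into
`N ∖ {y}`, whence `x ∈ A₁`, `y ∉ N` and `|N| = |A₁| − 1`. With `B₂ = W ∖ ({a₂, b₂} ∪ N)`, the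
only edge of `G` between `A₁` and `B₂` is `e`. In `G − e`, deleting `B₁ = W ∖ B₂` isolates the
vertices of `A₁`, and deleting `A₂ = U ∖ A₁` isolates those of `B₂`; a perfect matching bounds
the number of odd components by the size of the deleted set, and parity closes the remaining gap
of one.
-/

namespace SimpleGraph

lemma ConnectedComponent.supp_eq_singleton {G : SimpleGraph V} {v : V} (hv : ∀ w, ¬ G.Adj v w) :
    (G.connectedComponentMk v).supp = {v} := by
  ext w
  rw [ConnectedComponent.mem_supp_iff, ConnectedComponent.eq, mem_singleton_iff]
  constructor
  · rintro ⟨p⟩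
    cases p.reverse with
    | nil => rfl
    | cons h _ => exact absurd h (hv _)
  · rintro rfl
    rfl

lemma ncard_le_ncard_oddComponents [Finite V] (G : SimpleGraph V) {I : Set V}
    (hI : ∀ v ∈ I, ∀ w, ¬ G.Adj v w) : I.ncard ≤ G.oddComponents.ncard := by
  refine ncard_le_ncard_of_injOn G.connectedComponentMk (fun v hv => ?_) (fun v hv w _ h => ?_)
    (toFinite _)
  · simp [oddComponents, ConnectedComponent.supp_eq_singleton (hI v hv)]
  · have : w ∈ (G.connectedComponentMk v).supp := h.symm
    rwa [ConnectedComponent.supp_eq_singleton (hI v hv), mem_singleton_iff, eq_comm] at this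

lemma Subgraph.IsMatching.ncard_le_of_forall_adj [Finite V] {G : SimpleGraph V} {M : G.Subgraph}
    (hM : M.IsMatching) {A B : Set V} (hA : A ⊆ M.verts) (hAB : ∀ a ∈ A, ∀ b, M.Adj a b → b ∈ B) :
    A.ncard ≤ B.ncard := by
  choose! f hf using fun a (ha : a ∈ A) => (hM (hA ha)).exists
  exact ncard_le_ncard_of_injOn f (fun a ha => hAB a ha _ (hf a ha))
    (fun a ha b hb h => hM.eq_of_adj_right (hf a ha) (h ▸ hf b hb)) (toFinite B)

lemma Subgraph.IsMatching.verts_eq_union [Finite V] {K : SimpleGraph V} {s t : Set V}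
    (hK : K.IsBipartiteWith s t) {M : K.Subgraph} (hM : M.IsMatching) (hs : s ⊆ M.verts)
    (hst : t.ncard ≤ s.ncard) : M.verts = s ∪ t := by
  have hsub : M.verts ⊆ s ∪ t := fun v hv =>
    isBipartiteWith_support_subset hK ((hM hv).exists.imp fun _ => M.adj_sub)
  have hle : s.ncard ≤ (t ∩ M.verts).ncard := hM.ncard_le_of_forall_adj hs
    fun u hu w huw => ⟨hK.mem_of_mem_adj hu (M.adj_sub huw), M.edge_vert huw.symm⟩
  have ht : t ∩ M.verts = t := eq_of_subset_of_ncard_le inter_subset_left (hst.trans hle)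
  exact hsub.antisymm (union_subset hs (ht ▸ inter_subset_right))

lemma Subgraph.IsPerfectMatching.exists_of_spanningCoe_le {G G' : SimpleGraph V} {M : G.Subgraph}
    (hM : M.IsPerfectMatching) (h : M.spanningCoe ≤ G') :
    ∃ M' : G'.Subgraph, M'.IsPerfectMatching ∧ ∀ v w, M'.Adj v w ↔ M.Adj v w :=
  ⟨G'.toSubgraph M.spanningCoe h, (IsPerfectMatching.toSubgraph_iff h).2 hM, fun _ _ => Iff.rfl⟩

end SimpleGraph

lemma Set.ncard_sdiff_pair_add_two {α : Type*} [Finite α] {s : Set α} {a b : α} (hab : a ≠ b)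
    (h : {a, b} ⊆ s) : (s \ {a, b}).ncard + 2 = s.ncard := by
  rw [← ncard_pair hab]
  exact ncard_sdiff_add_ncard_of_subset h

lemma HasPM.mono {G G' : SimpleGraph V} (hG : HasPM G) (h : G ≤ G') : HasPM G' := by
  obtain ⟨M, hM⟩ := hG
  obtain ⟨M', hM', -⟩ := hM.exists_of_spanningCoe_le (M.spanningCoe_le.trans h)
  exact ⟨M', hM'⟩

lemma HasPM.even_card [Finite V] {G : SimpleGraph V} (hG : HasPM G) : Even (Nat.card V) := by
  obtain ⟨M, hM⟩ := hG
  have := Fintype.ofFinite V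
  simpa only [Nat.card_eq_fintype_card] using hM.even_card

lemma HasPM.exists_isPerfectMatching_adj {G : SimpleGraph V} {a b : V}
    (hG : HasPM (G.induce {a, b}ᶜ)) (hab : G.Adj a b) :
    ∃ M : G.Subgraph, M.IsPerfectMatching ∧ M.Adj a b := by
  obtain ⟨N, hN⟩ := hG
  let ι := Embedding.induce (G := G) ({a, b} : Set V)ᶜ
  have hverts : (N.map ι.toHom).verts = {a, b}ᶜ := by
    rw [Subgraph.map_verts, hN.2.verts_eq_univ, image_univ]
    exact Subtype.range_coe
  have hNι := hN.1.map ι.toHom ι.injective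
  refine ⟨N.map ι.toHom ⊔ G.subgraphOfAdj hab, ⟨hNι.sup (.subgraphOfAdj hab) ?_, ?_⟩,
    Subgraph.sup_adj.2 (Or.inr (subgraphOfAdj_adj_self hab))⟩
  · rw [hNι.support_eq_verts, (Subgraph.IsMatching.subgraphOfAdj hab).support_eq_verts, hverts,
      subgraphOfAdj_verts]
    exact disjoint_compl_left
  · rw [Subgraph.isSpanning_iff, Subgraph.verts_sup, hverts, subgraphOfAdj_verts]
    exact compl_union_self _

lemma MatchingCovered.hasPM {G : SimpleGraph V} (hG : MatchingCovered G) : HasPM G := by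
  obtain ⟨e, he⟩ := hG.2.1
  obtain ⟨M, hM, -⟩ := hG.2.2 e he
  exact ⟨M, hM⟩

lemma MatchingCovered.of_le {H G : SimpleGraph V} (hH : MatchingCovered H) (hle : H ≤ G)
    (h : ∀ e ∈ G.edgeSet \ H.edgeSet, ∃ M : G.Subgraph, M.IsPerfectMatching ∧ e ∈ M.edgeSet) :
    MatchingCovered G := by
  refine ⟨hH.1.mono hle, hH.2.1.mono (edgeSet_mono hle), fun e he => ?_⟩
  by_cases heH : e ∈ H.edgeSet
  · obtain ⟨M, hM, heM⟩ := hH.2.2 e heH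
    obtain ⟨M', hM', hM'M⟩ := hM.exists_of_spanningCoe_le (M.spanningCoe_le.trans hle)
    refine ⟨M', hM', ?_⟩
    induction e using Sym2.ind
    exact (hM'M _ _).2 heM
  · exact h e ⟨he, heH⟩

lemma oddComps_eq_ncard_oddComponents (G : SimpleGraph V) :
    oddComps G = G.oddComponents.ncard := by
  simp only [oddComps, oddComponents, ← Nat.card_coe_set_eq]
  rfl

lemma HasPM.oddComps_induce_compl_le [Finite V] {G : SimpleGraph V} (hG : HasPM G) (S : Set V) :
    oddComps (G.induce Sᶜ) ≤ S.ncard := by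
  obtain ⟨M, hM⟩ := hG
  have := not_isTutteViolator_of_isPerfectMatching hM S
  rw [IsTutteViolator, not_lt, Subgraph.deleteVerts, Subgraph.verts_top, ← compl_eq_univ_sdiff]
    at this
  rwa [oddComps_eq_ncard_oddComponents, induce_eq_coe_induce_top]

lemma HasPM.odd_oddComps_induce_compl_iff [Finite V] {G : SimpleGraph V} (hG : HasPM G)
    (S : Set V) : Odd (oddComps (G.induce Sᶜ)) ↔ Odd S.ncard := by
  have hV := hG.even_card
  rw [← ncard_add_ncard_compl S, Nat.even_add] at hV
  rw [oddComps_eq_ncard_oddComponents, odd_ncard_oddComponents, Nat.card_coe_set_eq,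
    ← Nat.not_even_iff_odd, ← Nat.not_even_iff_odd]
  exact not_congr hV.symm

lemma HasPM.isBarrier_of_forall_not_adj [Finite V] {G : SimpleGraph V} (hG : HasPM G)
    {S I : Set V} (hIS : Disjoint I S) (hI : ∀ v ∈ I, ∀ w ∉ S, ¬ G.Adj v w)
    (hcard : S.ncard = I.ncard + 1) : IsBarrier G S := by
  have hle := hG.oddComps_induce_compl_le S
  have hge : I.ncard ≤ oddComps (G.induce Sᶜ) := by
    have hIS' : I ⊆ range ((↑) : ↥Sᶜ → V) := by
      rw [Subtype.range_coe]
      exact hIS.subset_compl_right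
    have := ncard_le_ncard_oddComponents (G.induce Sᶜ) (I := ((↑) : ↥Sᶜ → V) ⁻¹' I)
      fun v hv w h => hI v hv w w.2 h
    rwa [ncard_preimage_of_injective_subset_range Subtype.val_injective hIS',
      ← oddComps_eq_ncard_oddComponents] at this
  have hpar := hG.odd_oddComps_induce_compl_iff S
  rw [Nat.odd_iff, Nat.odd_iff] at hpar
  unfold IsBarrier
  omega

namespace IsBipartition

variable {G : SimpleGraph V} {U W : Set V}

lemma symm (h : IsBipartition G U W) : IsBipartition G W U :=
  ⟨h.1.symm, union_comm U W ▸ h.2.1, fun a b hab => (h.2.2 a b hab).symm⟩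

lemma mono {G' : SimpleGraph V} (h : IsBipartition G U W) (hle : G' ≤ G) : IsBipartition G' U W :=
  ⟨h.1, h.2.1, fun a b hab => h.2.2 a b (hle hab)⟩

lemma ncard_le_of_hasPM [Finite V] (h : IsBipartition G U W) (hG : HasPM G) :
    U.ncard ≤ W.ncard := by
  obtain ⟨M, hM⟩ := hG
  refine hM.1.ncard_le_of_forall_adj (by simp [hM.2.verts_eq_univ]) fun u hu w huw => ?_
  exact ((h.2.2 u w (M.adj_sub huw)).resolve_right fun h' => h.1.ne_of_mem hu h'.1 rfl).2

lemma ncard_eq_of_hasPM [Finite V] (h : IsBipartition G U W) (hG : HasPM G) :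
    U.ncard = W.ncard :=
  (h.ncard_le_of_hasPM hG).antisymm (h.symm.ncard_le_of_hasPM hG)

end IsBipartition

structure IsNearBipartition (G : SimpleGraph V) (U W : Set V) (a₁ b₁ a₂ b₂ : V) : Prop where
  isBipartition : IsBipartition (G.deleteEdges {s(a₁, b₁), s(a₂, b₂)}) U W
  a₁_mem : a₁ ∈ U
  b₁_mem : b₁ ∈ U
  a₂_mem : a₂ ∈ W
  b₂_mem : b₂ ∈ W

namespace IsNearBipartition

variable {G : SimpleGraph V} {U W : Set V} {a₁ b₁ a₂ b₂ : V}

lemma symm (h : IsNearBipartition G U W a₁ b₁ a₂ b₂) : IsNearBipartition G W U a₂ b₂ a₁ b₁ :=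
  ⟨pair_comm (s(a₁, b₁)) _ ▸ h.isBipartition.symm, h.a₂_mem, h.b₂_mem, h.a₁_mem, h.b₁_mem⟩

lemma mono {G' : SimpleGraph V} (h : IsNearBipartition G U W a₁ b₁ a₂ b₂) (hle : G' ≤ G) :
    IsNearBipartition G' U W a₁ b₁ a₂ b₂ :=
  ⟨h.isBipartition.mono (deleteEdges_mono hle), h.a₁_mem, h.b₁_mem, h.a₂_mem, h.b₂_mem⟩

lemma disjoint (h : IsNearBipartition G U W a₁ b₁ a₂ b₂) : Disjoint U W := h.isBipartition.1

lemma mem_right_of_adj (h : IsNearBipartition G U W a₁ b₁ a₂ b₂) {u w : V} (hu : u ∈ U)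
    (huw : G.Adj u w) (hne : s(u, w) ≠ s(a₁, b₁)) : w ∈ W := by
  have hne₂ : s(u, w) ≠ s(a₂, b₂) := by
    rintro he
    have : u ∈ W := by
      rcases Sym2.eq_iff.1 he with ⟨rfl, -⟩ | ⟨rfl, -⟩
      exacts [h.a₂_mem, h.b₂_mem]
    exact h.disjoint.ne_of_mem hu this rfl
  have := h.isBipartition.2.2 u w (by simp [huw, hne, hne₂])
  exact (this.resolve_right fun h' => h.disjoint.ne_of_mem hu h'.1 rfl).2

lemma mem_right_of_adj_of_mem_sdiff (h : IsNearBipartition G U W a₁ b₁ a₂ b₂) {u w : V}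
    (hu : u ∈ U \ {a₁, b₁}) (huw : G.Adj u w) : w ∈ W := by
  refine h.mem_right_of_adj hu.1 huw fun he => hu.2 ?_
  rcases Sym2.eq_iff.1 he with ⟨rfl, -⟩ | ⟨rfl, -⟩ <;> simp

/-- Counting: a perfect matching through `s(a₂, b₂)` but not `s(a₁, b₁)` would match all of `U`
into `W \ {a₂}`. -/
lemma adj_of_adj [Finite V] (h : IsNearBipartition G U W a₁ b₁ a₂ b₂) (hcard : U.ncard = W.ncard)
    {M : G.Subgraph} (hM : M.IsPerfectMatching) (h₂ : M.Adj a₂ b₂) : M.Adj a₁ b₁ := by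
  by_contra h₁
  have hle : U.ncard ≤ (W \ {a₂}).ncard := by
    refine hM.1.ncard_le_of_forall_adj (by simp [hM.2.verts_eq_univ]) fun u hu w huw => ?_
    refine ⟨h.mem_right_of_adj hu (M.adj_sub huw) fun he => h₁ ?_, fun hw => ?_⟩
    · exact Subgraph.mem_edgeSet.1 (he ▸ Subgraph.mem_edgeSet.2 huw)
    · rw [mem_singleton_iff.1 hw] at huw
      exact h.disjoint.ne_of_mem hu h.b₂_mem (hM.1.eq_of_adj_right huw h₂.symm)
  have := ncard_sdiff_singleton_lt_of_mem h.a₂_mem (toFinite W)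
  omega

lemma adj_iff_adj [Finite V] (h : IsNearBipartition G U W a₁ b₁ a₂ b₂) (hcard : U.ncard = W.ncard)
    {M : G.Subgraph} (hM : M.IsPerfectMatching) : M.Adj a₁ b₁ ↔ M.Adj a₂ b₂ :=
  ⟨h.symm.adj_of_adj hcard.symm hM, h.adj_of_adj hcard hM⟩

lemma exists_isPerfectMatching_adj_of_isMatching [Finite V]
    (h : IsNearBipartition G U W a₁ b₁ a₂ b₂) (hcard : U.ncard = W.ncard) (h₁ : G.Adj a₁ b₁)
    (h₂ : G.Adj a₂ b₂) {K : SimpleGraph V} (hKG : K ≤ G)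
    (hK : K.IsBipartiteWith (U \ {a₁, b₁}) (W \ {a₂, b₂})) {M : K.Subgraph}
    (hM : M.IsMatching) (hU : U \ {a₁, b₁} ⊆ M.verts) :
    ∃ M' : G.Subgraph, M'.IsPerfectMatching ∧ M'.Adj a₁ b₁ := by
  have hU₁ : {a₁, b₁} ⊆ U := pair_subset h.a₁_mem h.b₁_mem
  have hW₂ : {a₂, b₂} ⊆ W := pair_subset h.a₂_mem h.b₂_mem
  have := ncard_sdiff_pair_add_two h₁.ne hU₁
  have := ncard_sdiff_pair_add_two h₂.ne hW₂
  set U' := U \ {a₁, b₁}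
  set W' := W \ {a₂, b₂}
  have hverts : M.verts = U' ∪ W' := hM.verts_eq_union hK hU (by omega)
  have hMK := hM.map_ofLE hKG
  have hverts' : (M.map (Hom.ofLE hKG)).verts = U' ∪ W' := by
    rw [Subgraph.map_verts, hverts, Hom.coe_ofLE, image_id]
  have hM₁ : (M.map (Hom.ofLE hKG) ⊔ G.subgraphOfAdj h₁).IsMatching := by
    refine hMK.sup (.subgraphOfAdj h₁) ?_
    rw [hMK.support_eq_verts, (Subgraph.IsMatching.subgraphOfAdj h₁).support_eq_verts, hverts',
      subgraphOfAdj_verts]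
    exact disjoint_union_left.2 ⟨disjoint_sdiff_left, h.disjoint.symm.mono sdiff_subset hU₁⟩
  refine ⟨M.map (Hom.ofLE hKG) ⊔ G.subgraphOfAdj h₁ ⊔ G.subgraphOfAdj h₂,
    ⟨hM₁.sup (.subgraphOfAdj h₂) ?_, ?_⟩,
    Subgraph.sup_adj.2 (Or.inl (Subgraph.sup_adj.2 (Or.inr (subgraphOfAdj_adj_self h₁))))⟩
  · rw [hM₁.support_eq_verts, (Subgraph.IsMatching.subgraphOfAdj h₂).support_eq_verts,
      Subgraph.verts_sup, hverts', subgraphOfAdj_verts, subgraphOfAdj_verts]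
    exact disjoint_union_left.2 ⟨disjoint_union_left.2 ⟨h.disjoint.mono sdiff_subset hW₂,
      disjoint_sdiff_left⟩, h.disjoint.mono hU₁ hW₂⟩
  · rw [Subgraph.isSpanning_iff, Subgraph.verts_sup, Subgraph.verts_sup, hverts',
      subgraphOfAdj_verts, subgraphOfAdj_verts, union_right_comm U', sdiff_union_of_subset hU₁,
      union_assoc, sdiff_union_of_subset hW₂]
    exact h.isBipartition.2.1

lemma exists_ncard_lt_of_forall_not_adj [Finite V] (h : IsNearBipartition G U W a₁ b₁ a₂ b₂)
    (hcard : U.ncard = W.ncard) (h₁ : G.Adj a₁ b₁) (h₂ : G.Adj a₂ b₂)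
    (hno : ∀ M : G.Subgraph, M.IsPerfectMatching → ¬ M.Adj a₁ b₁) :
    ∃ A ⊆ U \ {a₁, b₁},
      (⋃ v ∈ A, (G.between (U \ {a₁, b₁}) (W \ {a₂, b₂})).neighborSet v).ncard < A.ncard := by
  classical
  have := Fintype.ofFinite V
  have hK : (G.between (U \ {a₁, b₁}) (W \ {a₂, b₂})).IsBipartiteWith (U \ {a₁, b₁})
      (W \ {a₂, b₂}) := between_isBipartiteWith (h.disjoint.mono sdiff_subset sdiff_subset)
  by_contra! hall
  obtain ⟨M, hU, hM⟩ := exists_isMatching_of_forall_ncard_le hK hall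
  obtain ⟨M', hM', h₁'⟩ :=
    h.exists_isPerfectMatching_adj_of_isMatching hcard h₁ h₂ between_le hK hM hU
  exact hno M' hM' h₁'

lemma mem_of_isPerfectMatching [Finite V] (h : IsNearBipartition G U W a₁ b₁ a₂ b₂) {x y : V}
    (hy : y ∈ W) {M : G.Subgraph} (hM : M.IsPerfectMatching) (h₂ : M.Adj a₂ b₂) (hxy : M.Adj x y)
    {A N : Set V} (hA : A ⊆ U \ {a₁, b₁})
    (hN : ∀ p ∈ A, ∀ q ∈ W \ {a₂, b₂}, (G.deleteEdges {s(x, y)}).Adj p q → q ∈ N)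
    (hlt : N.ncard < A.ncard) :
    x ∈ A ∧ y ∈ (W \ {a₂, b₂}) \ N ∧ N.ncard + 1 = A.ncard := by
  have hW' : ∀ v ∈ A, ∀ w, M.Adj v w → w ∈ W \ {a₂, b₂} := by
    intro v hv w hvw
    have hvU := (hA hv).1
    refine ⟨h.mem_right_of_adj_of_mem_sdiff (hA hv) (M.adj_sub hvw), ?_⟩
    rintro (rfl | rfl)
    · exact h.disjoint.ne_of_mem hvU h.b₂_mem (hM.1.eq_of_adj_right hvw h₂.symm)
    · exact h.disjoint.ne_of_mem hvU h.a₂_mem (hM.1.eq_of_adj_right hvw h₂)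
  have hmaps : (A \ {x}).ncard ≤ (N \ {y}).ncard := by
    refine hM.1.ncard_le_of_forall_adj (by simp [hM.2.verts_eq_univ]) fun v hv w hvw => ?_
    have hvx : v ≠ x := hv.2
    refine ⟨hN v hv.1 w (hW' v hv.1 w hvw) (deleteEdges_adj.2 ⟨M.adj_sub hvw, fun he => ?_⟩),
      fun hw => hvx (hM.1.eq_of_adj_right hvw (mem_singleton_iff.1 hw ▸ hxy))⟩
    rcases Sym2.eq_iff.1 (mem_singleton_iff.1 he) with ⟨rfl, -⟩ | ⟨rfl, -⟩
    exacts [hvx rfl, h.disjoint.ne_of_mem (hA hv.1).1 hy rfl]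
  have hxA : x ∈ A := by
    by_contra hx
    rw [sdiff_singleton_eq_self hx] at hmaps
    have := ncard_sdiff_singleton_le N y
    omega
  have hyN : y ∉ N := by
    intro hyN
    have := ncard_sdiff_singleton_add_one hxA
    have := ncard_sdiff_singleton_add_one hyN
    omega
  rw [sdiff_singleton_eq_self hyN] at hmaps
  have := ncard_sdiff_singleton_add_one hxA
  exact ⟨hxA, ⟨hW' x hxA y hxy, hyN⟩, by omega⟩

lemma exists_barrier_partition [Finite V] (h : IsNearBipartition G U W a₁ b₁ a₂ b₂)
    (hcard : U.ncard = W.ncard) (h₂ : a₂ ≠ b₂) {x y : V} (hPM : HasPM (G.deleteEdges {s(x, y)}))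
    {A N : Set V} (hA : A ⊆ U \ {a₁, b₁}) (hNW : N ⊆ W \ {a₂, b₂})
    (hN : ∀ p ∈ A, ∀ q ∈ W \ {a₂, b₂}, (G.deleteEdges {s(x, y)}).Adj p q → q ∈ N)
    (hxA : x ∈ A) (hy : y ∈ (W \ {a₂, b₂}) \ N) (hcardN : N.ncard + 1 = A.ncard) :
    ∃ A1 A2 B1 B2 : Set V,
      A1 ∪ A2 = U ∧ Disjoint A1 A2 ∧ B1 ∪ B2 = W ∧ Disjoint B1 B2 ∧
      B1.ncard = A1.ncard + 1 ∧ A2.ncard = B2.ncard + 1 ∧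
      a₁ ∈ A2 ∧ b₁ ∈ A2 ∧ a₂ ∈ B1 ∧ b₂ ∈ B1 ∧
      ((x ∈ A1 ∧ y ∈ B2) ∨ (y ∈ A1 ∧ x ∈ B2)) ∧
      (∀ p ∈ A1, ∀ q ∈ B2, G.Adj p q → s(p, q) = s(x, y)) ∧
      IsBarrier (G.deleteEdges {s(x, y)}) B1 ∧
      IsBarrier (G.deleteEdges {s(x, y)}) A2 := by
  have hAU : A ⊆ U := hA.trans sdiff_subset
  have hB2W : (W \ {a₂, b₂}) \ N ⊆ W := sdiff_subset.trans sdiff_subset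
  have := ncard_sdiff_add_ncard_of_subset hAU
  have := ncard_sdiff_add_ncard_of_subset hB2W
  have := ncard_sdiff_add_ncard_of_subset hNW
  have := ncard_sdiff_pair_add_two h₂ (pair_subset h.a₂_mem h.b₂_mem)
  set B2 := (W \ {a₂, b₂}) \ N
  have huniq : ∀ p ∈ A, ∀ q ∈ B2, G.Adj p q → s(p, q) = s(x, y) := fun p hp q hq hpq =>
    by_contra fun hne => hq.2 (hN p hp q hq.1 (deleteEdges_adj.2 ⟨hpq, hne⟩))
  have hmemB1 : ∀ w ∈ W, w ∉ W \ B2 → w ∈ B2 := fun w hw hw' => by_contra fun h' => hw' ⟨hw, h'⟩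
  refine ⟨A, U \ A, W \ B2, B2, union_sdiff_cancel hAU, disjoint_sdiff_right,
    sdiff_union_of_subset hB2W, disjoint_sdiff_left, by omega, by omega,
    ⟨h.a₁_mem, fun h' => (hA h').2 (by simp)⟩, ⟨h.b₁_mem, fun h' => (hA h').2 (by simp)⟩,
    ⟨h.a₂_mem, fun h' => h'.1.2 (by simp)⟩, ⟨h.b₂_mem, fun h' => h'.1.2 (by simp)⟩,
    Or.inl ⟨hxA, hy⟩, huniq, ?_, ?_⟩
  · refine hPM.isBarrier_of_forall_not_adj (I := A)
      (disjoint_of_subset_left hAU (h.disjoint.mono_right sdiff_subset)) (fun v hv w hw hvw => ?_)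
      (by omega)
    have hvw := deleteEdges_adj.1 hvw
    exact hvw.2 (huniq v hv w (hmemB1 w (h.mem_right_of_adj_of_mem_sdiff (hA hv) hvw.1) hw) hvw.1)
  · refine hPM.isBarrier_of_forall_not_adj (I := B2)
      (disjoint_of_subset_left hB2W (h.disjoint.symm.mono_right sdiff_subset))
      (fun v hv w hw hvw => ?_) (by omega)
    have hvw := deleteEdges_adj.1 hvw
    have hwA : w ∈ A := by_contra fun h' =>
      hw ⟨h.symm.mem_right_of_adj_of_mem_sdiff hv.1 hvw.1, h'⟩
    exact hvw.2 (Sym2.eq_swap.trans (huniq w hwA v hv hvw.1.symm))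

lemma not_adj_of_not_removable [Finite V] (h : IsNearBipartition G U W a₁ b₁ a₂ b₂)
    (hcard : U.ncard = W.ncard) {x y : V} (hxy : G.Adj x y) (hnonrem : ¬ Removable G s(x, y))
    (hremH : Removable (G.deleteEdges {s(a₁, b₁), s(a₂, b₂)}) s(x, y))
    {M : (G.deleteEdges {s(x, y)}).Subgraph} (hM : M.IsPerfectMatching) : ¬ M.Adj a₁ b₁ := by
  intro hM₁
  have hM₂ := ((h.mono (deleteEdges_le _)).adj_iff_adj hcard hM).1 hM₁
  refine hnonrem ⟨hxy, hremH.2.of_le (deleteEdges_mono (deleteEdges_le _))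
    fun e he => ⟨M, hM, ?_⟩⟩
  have : e = s(a₁, b₁) ∨ e = s(a₂, b₂) := by
    simp only [edgeSet_deleteEdges, mem_sdiff, mem_insert_iff, mem_singleton_iff] at he
    tauto
  rcases this with rfl | rfl
  exacts [hM₁, hM₂]

theorem exists_barrier_partition_of_not_removable [Finite V]
    (h : IsNearBipartition G U W a₁ b₁ a₂ b₂) (hcard : U.ncard = W.ncard) (h₁ : G.Adj a₁ b₁)
    (h₂ : G.Adj a₂ b₂) (hPM₁ : HasPM (G.induce {a₁, b₁}ᶜ)) {x y : V} (hxy : G.Adj x y)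
    (hy : y ∈ W) (hnonrem : ¬ Removable G s(x, y))
    (hremH : Removable (G.deleteEdges {s(a₁, b₁), s(a₂, b₂)}) s(x, y)) :
    ∃ A1 A2 B1 B2 : Set V,
      A1 ∪ A2 = U ∧ Disjoint A1 A2 ∧ B1 ∪ B2 = W ∧ Disjoint B1 B2 ∧
      B1.ncard = A1.ncard + 1 ∧ A2.ncard = B2.ncard + 1 ∧
      a₁ ∈ A2 ∧ b₁ ∈ A2 ∧ a₂ ∈ B1 ∧ b₂ ∈ B1 ∧
      ((x ∈ A1 ∧ y ∈ B2) ∨ (y ∈ A1 ∧ x ∈ B2)) ∧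
      (∀ p ∈ A1, ∀ q ∈ B2, G.Adj p q → s(p, q) = s(x, y)) ∧
      IsBarrier (G.deleteEdges {s(x, y)}) B1 ∧
      IsBarrier (G.deleteEdges {s(x, y)}) A2 := by
  set Ge := G.deleteEdges {s(x, y)}
  have hne : s(x, y) ≠ s(a₁, b₁) ∧ s(x, y) ≠ s(a₂, b₂) := by
    simpa [not_or] using (deleteEdges_adj.1 hremH.1).2
  have hGe : IsNearBipartition Ge U W a₁ b₁ a₂ b₂ := h.mono (deleteEdges_le _)
  have hHGe : (G.deleteEdges {s(a₁, b₁), s(a₂, b₂)}).deleteEdges {s(x, y)} ≤ Ge :=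
    deleteEdges_mono (deleteEdges_le _)
  have hno : ∀ M : Ge.Subgraph, M.IsPerfectMatching → ¬ M.Adj a₁ b₁ :=
    fun _ => h.not_adj_of_not_removable hcard hxy hnonrem hremH
  obtain ⟨M₁, hM₁, hM₁a⟩ := hPM₁.exists_isPerfectMatching_adj h₁
  have hM₁xy : M₁.Adj x y := by
    by_contra hxy₁
    obtain ⟨M, hM, hMM₁⟩ := hM₁.exists_of_spanningCoe_le (G' := Ge) fun v w hvw =>
      deleteEdges_adj.2 ⟨M₁.adj_sub hvw, fun he => hxy₁ (Subgraph.mem_edgeSet.1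
        (mem_singleton_iff.1 he ▸ Subgraph.mem_edgeSet.2 hvw))⟩
    exact hno M hM ((hMM₁ a₁ b₁).2 hM₁a)
  obtain ⟨A, hA, hlt⟩ := hGe.exists_ncard_lt_of_forall_not_adj hcard
    (deleteEdges_adj.2 ⟨h₁, fun he => hne.1 (mem_singleton_iff.1 he).symm⟩)
    (deleteEdges_adj.2 ⟨h₂, fun he => hne.2 (mem_singleton_iff.1 he).symm⟩) hno
  set N := ⋃ v ∈ A, (Ge.between (U \ {a₁, b₁}) (W \ {a₂, b₂})).neighborSet v
  have hN : ∀ p ∈ A, ∀ q ∈ W \ {a₂, b₂}, Ge.Adj p q → q ∈ N := fun p hp q hq hpq =>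
    mem_iUnion₂.2 ⟨p, hp, between_adj.2 ⟨hpq, Or.inl ⟨hA hp, hq⟩⟩⟩
  have hNW : N ⊆ W \ {a₂, b₂} := iUnion₂_subset fun v hv =>
    isBipartiteWith_neighborSet_subset
      (between_isBipartiteWith (h.disjoint.mono sdiff_subset sdiff_subset)) (hA hv)
  obtain ⟨hxA, hyN, hcardN⟩ := h.mem_of_isPerfectMatching hy hM₁
    ((h.adj_iff_adj hcard hM₁).1 hM₁a) hM₁xy hA hN hlt
  exact h.exists_barrier_partition hcard h₂.ne (hremH.2.hasPM.mono hHGe) hA hNW hN hxA hyN hcardN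

end IsNearBipartition

theorem stmt8_general [Fintype V] (G : SimpleGraph V) (hG : IsBrick G)
    (a1 b1 a2 b2 : V) (he1 : G.Adj a1 b1) (he2 : G.Adj a2 b2)
    (hH : MatchingCovered (G.deleteEdges {s(a1, b1), s(a2, b2)}))
    (U W : Set V)
    (hbip : IsBipartition (G.deleteEdges {s(a1, b1), s(a2, b2)}) U W)
    (ha1 : a1 ∈ U) (hb1 : b1 ∈ U) (ha2 : a2 ∈ W) (hb2 : b2 ∈ W)
    (x y : V) (hxy : G.Adj x y)
    (hnonrem : ¬ Removable G s(x, y))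
    (hremH : Removable (G.deleteEdges {s(a1, b1), s(a2, b2)}) s(x, y)) :
    ∃ A1 A2 B1 B2 : Set V,
      A1 ∪ A2 = U ∧ Disjoint A1 A2 ∧ B1 ∪ B2 = W ∧ Disjoint B1 B2 ∧
      B1.ncard = A1.ncard + 1 ∧ A2.ncard = B2.ncard + 1 ∧
      a1 ∈ A2 ∧ b1 ∈ A2 ∧ a2 ∈ B1 ∧ b2 ∈ B1 ∧
      ((x ∈ A1 ∧ y ∈ B2) ∨ (y ∈ A1 ∧ x ∈ B2)) ∧
      (∀ p ∈ A1, ∀ q ∈ B2, G.Adj p q → s(p, q) = s(x, y)) ∧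
      IsBarrier (G.deleteEdges {s(x, y)}) B1 ∧
      IsBarrier (G.deleteEdges {s(x, y)}) A2 := by
  have hN : IsNearBipartition G U W a1 b1 a2 b2 := ⟨hbip, ha1, hb1, ha2, hb2⟩
  have hcard := hbip.ncard_eq_of_hasPM hH.hasPM
  have hPM₁ := hG.2 a1 b1 he1.ne
  rcases hbip.2.2 x y hremH.1 with ⟨-, hy⟩ | ⟨hx, -⟩
  · exact hN.exists_barrier_partition_of_not_removable hcard he1 he2 hPM₁ hxy hy hnonrem hremH
  · rw [Sym2.eq_swap (a := x)] at hnonrem hremH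
    have := hN.exists_barrier_partition_of_not_removable hcard he1 he2 hPM₁ hxy.symm hx hnonrem
      hremH
    rw [Sym2.eq_swap (a := y)] at this
    simpa only [or_comm (a := y ∈ _ ∧ _)] using this

/-- structure of nonremovable edges of type I in a near-bipartite
brick. -/
theorem stmt8 [Fintype V] (G : SimpleGraph V) (hG : IsBrick G)
    (a1 b1 a2 b2 : V) (he1 : G.Adj a1 b1) (he2 : G.Adj a2 b2)
    (hnee : s(a1, b1) ≠ s(a2, b2))
    (hnr1 : ¬ Removable G s(a1, b1)) (hnr2 : ¬ Removable G s(a2, b2))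
    (hH : MatchingCovered (G.deleteEdges {s(a1, b1), s(a2, b2)}))
    (U W : Set V)
    (hbip : IsBipartition (G.deleteEdges {s(a1, b1), s(a2, b2)}) U W)
    (ha1 : a1 ∈ U) (hb1 : b1 ∈ U) (ha2 : a2 ∈ W) (hb2 : b2 ∈ W)
    (x y : V) (hxy : G.Adj x y)
    (hex1 : s(x, y) ≠ s(a1, b1)) (hex2 : s(x, y) ≠ s(a2, b2))
    (hnonrem : ¬ Removable G s(x, y))
    (hremH : Removable (G.deleteEdges {s(a1, b1), s(a2, b2)}) s(x, y)) :
    ∃ A1 A2 B1 B2 : Set V,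
      A1 ∪ A2 = U ∧ Disjoint A1 A2 ∧ B1 ∪ B2 = W ∧ Disjoint B1 B2 ∧
      B1.ncard = A1.ncard + 1 ∧ A2.ncard = B2.ncard + 1 ∧
      a1 ∈ A2 ∧ b1 ∈ A2 ∧ a2 ∈ B1 ∧ b2 ∈ B1 ∧
      ((x ∈ A1 ∧ y ∈ B2) ∨ (y ∈ A1 ∧ x ∈ B2)) ∧
      (∀ p ∈ A1, ∀ q ∈ B2, G.Adj p q → s(p, q) = s(x, y)) ∧
      IsBarrier (G.deleteEdges {s(x, y)}) B1 ∧
      IsBarrier (G.deleteEdges {s(x, y)}) A2 :=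
  stmt8_general G hG a1 b1 a2 b2 he1 he2 hH U W hbip ha1 hb1 ha2 hb2 x y hxy hnonrem hremH
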